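/- arXiv:1403.2647 — 3 statements merged into one kernel-verified Lean document; each statement's English description precedes it below -/
import Mathlib

section
/- Let I be any index set and let (X_i)_{i∈I} be a family of real Banach spaces each having the nonstrict Opial property. Then the c0-sum X of (X_i)_{i∈I} has the nonstrict Opial property: for every weakly null sequence (x_n) in X and every x ∈ X, limsup_n ‖x_n‖_∞ ≤ limsup_n ‖x_n − x‖_∞. -/
open Filter Topology MeasureTheory
open scoped ENNReal ZeroAtInfty

noncomputable section

/-- A sequence in a Banach space is weakly null if `φ (x n) → 0` for every
continuous linear functional `φ`. -/
def WeaklyNull {X : Type*} [NormedAddCommGroup X] [NormedSpace ℝ X] (u : ℕ → X) : Prop :=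
  ∀ φ : X →L[ℝ] ℝ, Tendsto (fun n => φ (u n)) atTop (𝓝 0)

/-- The Schur property: every weakly null sequence converges to `0` in norm. -/
def SchurProperty (X : Type*) [NormedAddCommGroup X] [NormedSpace ℝ X] : Prop :=
  ∀ u : ℕ → X, WeaklyNull u → Tendsto (fun n => ‖u n‖) atTop (𝓝 0)

/-- The Opial modulus `r_X(c)`. -/
def opialModulus (X : Type*) [NormedAddCommGroup X] [NormedSpace ℝ X] (c : ℝ) : ℝ :=
  sInf { d : ℝ | ∃ (x : X) (u : ℕ → X), c ≤ ‖x‖ ∧ WeaklyNull u ∧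
    1 ≤ liminf (fun n => ‖u n‖) atTop ∧
    d = liminf (fun n => ‖u n - x‖) atTop - 1 }

/-- The modulus `η_X(ε, R)`. -/
def etaModulus (X : Type*) [NormedAddCommGroup X] [NormedSpace ℝ X] (ε R : ℝ) : ℝ :=
  sInf { d : ℝ | ∃ (x : X) (u : ℕ → X), ε ≤ ‖x‖ ∧ WeaklyNull u ∧
    limsup (fun n => ‖u n‖) atTop ≤ R ∧
    d = liminf (fun n => ‖u n - x‖) atTop - liminf (fun n => ‖u n‖) atTop }

/-- The García-Falset coefficient `R(X)`. -/
def garciaFalset (X : Type*) [NormedAddCommGroup X] [NormedSpace ℝ X] : ℝ :=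
  sSup { a : ℝ | ∃ (x : X) (u : ℕ → X), ‖x‖ ≤ 1 ∧ (∀ n, ‖u n‖ ≤ 1) ∧ WeaklyNull u ∧
    a = liminf (fun n => ‖u n + x‖) atTop }

/-- The degree of WORTHness `w(X)`. -/
def worthDegree (X : Type*) [NormedAddCommGroup X] [NormedSpace ℝ X] : ℝ :=
  sSup { r : ℝ | 0 ≤ r ∧ ∀ (x : X) (u : ℕ → X), WeaklyNull u →
    r * liminf (fun n => ‖u n + x‖) atTop ≤ liminf (fun n => ‖u n - x‖) atTop }

/-- Gao's modulus of u-convexity `u_X(ε)`. -/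
def uModulus (X : Type*) [NormedAddCommGroup X] [NormedSpace ℝ X] (ε : ℝ) : ℝ :=
  sInf { d : ℝ | ∃ (x y : X) (φ : X →L[ℝ] ℝ), ‖x‖ = 1 ∧ ‖y‖ = 1 ∧ ‖φ‖ = 1 ∧
    φ x = 1 ∧ φ y ≤ 1 - ε ∧ d = 1 - ‖(2⁻¹ : ℝ) • (x + y)‖ }

/-- The c₀-sum of a family of Banach spaces: the closure, inside the ℓ∞-sum, of the
set of finitely supported families. -/
def c0Sum {I : Type*} (X : I → Type*) [∀ i, NormedAddCommGroup (X i)]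
    [∀ i, NormedSpace ℝ (X i)] : Submodule ℝ (lp X ∞) :=
  (Submodule.span ℝ { f : lp X ∞ | Set.Finite { i | (f : ∀ i, X i) i ≠ 0 } }).topologicalClosure

end

/-! For finitely supported `y`, the coordinate sequences of `u` are weakly null, so the Opial
property of the finitely many `X i` with `y i ≠ 0` bounds `limsup ‖u n i‖` by
`limsup ‖u n - y‖`, while off the support `u n` and `u n - y` have the same coordinates; hence
`limsup ‖u n‖ ≤ limsup ‖u n - y‖`. Weakly null sequences are bounded, so the right-hand side
is 1-Lipschitz in `y`, and the inequality extends to the closure of the finitely supported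
families. -/

section WeaklyNull

variable {E F : Type*} [NormedAddCommGroup E] [NormedSpace ℝ E]
  [NormedAddCommGroup F] [NormedSpace ℝ F]

lemma WeaklyNull.map {u : ℕ → E} (hu : WeaklyNull u) (T : E →L[ℝ] F) :
    WeaklyNull (fun n => T (u n)) :=
  fun φ => hu (φ.comp T)

/-- Uniform boundedness, applied to the images of `u n` in the bidual. -/
lemma WeaklyNull.isBoundedUnder_norm {u : ℕ → E} (hu : WeaklyNull u) :
    IsBoundedUnder (· ≤ ·) atTop (fun n => ‖u n‖) := by
  let J := NormedSpace.inclusionInDoubleDualLi ℝ (E := E)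
  have hpointwise : ∀ φ : StrongDual ℝ E, ∃ C, ∀ n, ‖J (u n) φ‖ ≤ C := fun φ => by
    obtain ⟨C, hC⟩ := (hu φ).norm.bddAbove_range
    exact ⟨C, fun n => hC (Set.mem_range_self n)⟩
  obtain ⟨C, hC⟩ := banach_steinhaus (g := fun n => J (u n)) hpointwise
  exact isBoundedUnder_of ⟨C, fun n => by simpa [J.norm_map] using hC n⟩

end WeaklyNull

section LimsupNormSub

variable {E : Type*} [SeminormedAddCommGroup E] {v : ℕ → E}

lemma isBoundedUnder_norm_sub (hv : IsBoundedUnder (· ≤ ·) atTop (fun n => ‖v n‖)) (x : E) :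
    IsBoundedUnder (· ≤ ·) atTop (fun n => ‖v n - x‖) :=
  (isBoundedUnder_le_add hv isBoundedUnder_const).mono_le <|
    Eventually.of_forall fun n => norm_sub_le (v n) x

lemma limsup_norm_sub_le_add_dist (hv : IsBoundedUnder (· ≤ ·) atTop (fun n => ‖v n‖))
    (x y : E) :
    limsup (fun n => ‖v n - x‖) atTop ≤ limsup (fun n => ‖v n - y‖) atTop + dist x y := by
  have hcobdd : IsCoboundedUnder (· ≤ ·) atTop (fun n => ‖v n - y‖) :=
    isCoboundedUnder_le_of_le atTop fun n => norm_nonneg _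
  rw [← limsup_add_const atTop _ _ (isBoundedUnder_norm_sub hv y) hcobdd]
  refine limsup_le_limsup (Eventually.of_forall fun n => ?_)
    (isCoboundedUnder_le_of_le atTop fun n => norm_nonneg _) ?_
  · simpa [dist_eq_norm'] using norm_sub_le_norm_sub_add_norm_sub (v n) y x
  · exact isBoundedUnder_le_add (isBoundedUnder_norm_sub hv y) isBoundedUnder_const

lemma lipschitzWith_limsup_norm_sub (hv : IsBoundedUnder (· ≤ ·) atTop (fun n => ‖v n‖)) :
    LipschitzWith 1 (fun x => limsup (fun n => ‖v n - x‖) atTop) :=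
  LipschitzWith.of_le_add (limsup_norm_sub_le_add_dist hv)

end LimsupNormSub

namespace lp

variable {I : Type*} {X : I → Type*} [∀ i, NormedAddCommGroup (X i)]

lemma finite_support_of_mem_span [∀ i, NormedSpace ℝ (X i)] {f : lp X ∞}
    (hf : f ∈ Submodule.span ℝ {g : lp X ∞ | {i | g i ≠ 0}.Finite}) :
    {i | f i ≠ 0}.Finite := by
  induction hf using Submodule.span_induction with
  | mem g hg => exact hg
  | zero => simp
  | add g h _ _ hg hh =>
    refine (hg.union hh).subset fun i hi => ?_
    contrapose! hi
    simp_all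
  | smul c g _ hg => exact hg.subset fun i hi h0 => hi (by simp [h0])

variable {w : ℕ → lp X ∞}

lemma isBoundedUnder_norm_apply (hw : IsBoundedUnder (· ≤ ·) atTop (fun n => ‖w n‖)) (i : I) :
    IsBoundedUnder (· ≤ ·) atTop (fun n => ‖w n i‖) :=
  hw.mono_le <| Eventually.of_forall fun n => norm_apply_le_norm ENNReal.top_ne_zero (w n) i

lemma limsup_norm_apply_le (hw : IsBoundedUnder (· ≤ ·) atTop (fun n => ‖w n‖)) (i : I) :
    limsup (fun n => ‖w n i‖) atTop ≤ limsup (fun n => ‖w n‖) atTop :=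
  limsup_le_limsup (Eventually.of_forall fun n => norm_apply_le_norm ENNReal.top_ne_zero (w n) i)
    (isCoboundedUnder_le_of_le atTop fun _ => norm_nonneg _) hw

lemma limsup_norm_le_limsup_norm_sub_of_finite_support
    (hw : IsBoundedUnder (· ≤ ·) atTop (fun n => ‖w n‖)) {y : lp X ∞}
    (hy : {i | y i ≠ 0}.Finite)
    (hcoord : ∀ i, limsup (fun n => ‖w n i‖) atTop ≤ limsup (fun n => ‖w n i - y i‖) atTop) :
    limsup (fun n => ‖w n‖) atTop ≤ limsup (fun n => ‖w n - y‖) atTop := by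
  set M := limsup (fun n => ‖w n - y‖) atTop
  have hbdd := isBoundedUnder_norm_sub hw y
  have hM : 0 ≤ M :=
    le_limsup_of_frequently_le (Frequently.of_forall fun n => norm_nonneg _) hbdd
  refine le_of_forall_pos_le_add fun δ hδ => ?_
  have hsupport : ∀ᶠ n in atTop, ∀ i ∈ hy.toFinset, ‖w n i‖ < M + δ := by
    refine (eventually_all_finset _).2 fun i _ => eventually_lt_of_limsup_lt ?_
      (isBoundedUnder_norm_apply hw i)
    calc limsup (fun n => ‖w n i‖) atTop
        ≤ limsup (fun n => ‖(w n - y) i‖) atTop := hcoord i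
      _ ≤ M := limsup_norm_apply_le hbdd i
      _ < M + δ := by linarith
  have hsub : ∀ᶠ n in atTop, ‖w n - y‖ < M + δ :=
    eventually_lt_of_limsup_lt (by linarith) hbdd
  refine limsup_le_of_le (isCoboundedUnder_le_of_le atTop fun n => norm_nonneg _) ?_
  filter_upwards [hsupport, hsub] with n hn hn'
  refine norm_le_of_forall_le (by linarith) fun i => ?_
  by_cases hi : y i = 0
  · calc ‖w n i‖ = ‖(w n - y) i‖ := by simp [hi]
      _ ≤ ‖w n - y‖ := norm_apply_le_norm ENNReal.top_ne_zero _ i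
      _ ≤ M + δ := hn'.le
  · exact (hn i (hy.mem_toFinset.2 hi)).le

end lp

theorem statement15_general {I : Type*} (X : I → Type*) [∀ i, NormedAddCommGroup (X i)]
    [∀ i, NormedSpace ℝ (X i)]
    (hOp : ∀ i, ∀ u : ℕ → X i, WeaklyNull u → ∀ z : X i,
      limsup (fun n => ‖u n‖) atTop ≤ limsup (fun n => ‖u n - z‖) atTop)
    (u : ℕ → c0Sum X) (hu : WeaklyNull u) (x : c0Sum X) :
    limsup (fun n => ‖u n‖) atTop ≤ limsup (fun n => ‖u n - x‖) atTop := by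
  let v : ℕ → lp X ∞ := fun n => u n
  have hv : IsBoundedUnder (· ≤ ·) atTop (fun n => ‖v n‖) := hu.isBoundedUnder_norm
  have hcoord (i : I) : WeaklyNull (fun n => v n i) :=
    hu.map ((lp.evalCLM ℝ X ∞ i).comp (c0Sum X).subtypeL)
  have hclosed : IsClosed {z : lp X ∞ |
      limsup (fun n => ‖v n‖) atTop ≤ limsup (fun n => ‖v n - z‖) atTop} :=
    isClosed_le continuous_const (lipschitzWith_limsup_norm_sub hv).continuous
  have hdense : (x : lp X ∞) ∈ closure (Submodule.span ℝ
      {g : lp X ∞ | {i | g i ≠ 0}.Finite} : Set (lp X ∞)) := x.2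
  exact closure_minimal (fun y hy => lp.limsup_norm_le_limsup_norm_sub_of_finite_support hv
    (lp.finite_support_of_mem_span hy) fun i => hOp i _ (hcoord i) (y i)) hclosed hdense

/-- The c₀-sum of a family of Banach spaces with the nonstrict Opial property has the
nonstrict Opial property. -/
theorem statement15 {I : Type*} (X : I → Type*) [∀ i, NormedAddCommGroup (X i)]
    [∀ i, NormedSpace ℝ (X i)] [∀ i, CompleteSpace (X i)]
    (hOp : ∀ i, ∀ u : ℕ → X i, WeaklyNull u → ∀ z : X i,
      limsup (fun n => ‖u n‖) atTop ≤ limsup (fun n => ‖u n - z‖) atTop)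
    (u : ℕ → c0Sum X) (hu : WeaklyNull u) (x : c0Sum X) :
    limsup (fun n => ‖u n‖) atTop ≤ limsup (fun n => ‖u n - x‖) atTop :=
  statement15_general X hOp u hu x
end

section
/- Let (S,𝒜,μ) be a complete, finite measure space, 1 ≤ p < ∞ and X a real Banach space with the nonstrict Opial property. Let (f_n)_{n∈ℕ} be a bounded sequence in L^p(μ,X) such that for almost every t ∈ S the sequence (f_n(t))_{n∈ℕ} converges weakly to zero in X, and suppose there is a function g ∈ L^p(μ) such that ‖f_n(t)‖ → g(t) for almost every t ∈ S. Then for every f ∈ L^p(μ,X) and every measurable set A ∈ 𝒜, ∫_A liminf_n ‖f_n(t) − f(t)‖^p dμ(t) − ∫_A g(t)^p dμ(t) ≤ limsup_n ‖f_n − f‖_p^p − limsup_n ‖f_n‖_p^p. In particular, limsup_n ‖f_n‖_p ≤ limsup_n ‖f_n − f‖_p for every f ∈ L^p(μ,X). -/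
open Filter Topology MeasureTheory
open scoped ENNReal ZeroAtInfty

/-!
Almost everywhere, the nonstrict Opial property applied along subsequences gives
`g t ≤ liminf ‖f n t - f₀ t‖`, so the integrand `liminf ‖f n - f₀‖ ^ p - g ^ p` is nonnegative
and its integral over `A` is at most its integral over the whole space.

For the whole space, the elementary inequality `‖x‖ ^ p ≤ ‖y‖ ^ p + ε ‖x‖ ^ p + C_ε ‖x - y‖ ^ p`
makes `‖f n - f₀‖ ^ p - (1 - ε) ‖f n‖ ^ p + C_ε ‖f₀‖ ^ p` nonnegative. Fatou's lemma applied to it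
bounds `∫ liminf ‖f n - f₀‖ ^ p - ∫ g ^ p` by `liminf (‖f n - f₀‖_p ^ p - ‖f n‖_p ^ p)` up to
`ε sup ‖f n‖_p ^ p`, and `ε → 0` removes the error. The second claim is the case `A = ∅`.
-/

namespace Real

theorem exists_add_rpow_le {p ε : ℝ} (hp : 0 < p) (hε : 0 < ε) :
    ∃ C, 0 ≤ C ∧ ∀ u d : ℝ, 0 ≤ u → 0 ≤ d → (u + d) ^ p ≤ (1 + ε) * u ^ p + C * d ^ p := by
  set δ := (1 + ε) ^ p⁻¹ - 1
  have hδ : 0 < δ := sub_pos.2 (one_lt_rpow (by linarith) (inv_pos.2 hp))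
  have hδp : (1 + δ) ^ p = 1 + ε := by
    simp only [δ, add_sub_cancel, ← rpow_mul (by linarith : (0:ℝ) ≤ 1 + ε),
      inv_mul_cancel₀ hp.ne', rpow_one]
  refine ⟨(1 + δ⁻¹) ^ p, by positivity, fun u d hu hd => ?_⟩
  rcases le_total d (δ * u) with hdu | hud
  · calc (u + d) ^ p ≤ ((1 + δ) * u) ^ p := by gcongr; linarith
      _ = (1 + ε) * u ^ p := by rw [mul_rpow (by positivity) hu, hδp]
      _ ≤ (1 + ε) * u ^ p + (1 + δ⁻¹) ^ p * d ^ p := le_add_of_nonneg_right (by positivity)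
  · have : u ≤ δ⁻¹ * d := by rw [inv_mul_eq_div, le_div_iff₀ hδ]; linarith
    calc (u + d) ^ p ≤ ((1 + δ⁻¹) * d) ^ p := by gcongr; linarith
      _ = (1 + δ⁻¹) ^ p * d ^ p := mul_rpow (by positivity) hd
      _ ≤ (1 + ε) * u ^ p + (1 + δ⁻¹) ^ p * d ^ p := le_add_of_nonneg_left (by positivity)

-- `x ^ p` is not monotone on all of `ℝ` (its values at `x < 0` are junk); truncating at `0` is.
theorem monotone_max_zero_rpow {p : ℝ} (hp : 0 ≤ p) : Monotone fun x : ℝ => max x 0 ^ p :=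
  fun _ _ hxy => rpow_le_rpow (le_max_right _ _) (max_le_max hxy le_rfl) hp

theorem continuous_max_zero_rpow {p : ℝ} (hp : 0 ≤ p) : Continuous fun x : ℝ => max x 0 ^ p :=
  (continuous_id.max continuous_const).rpow_const fun _ => Or.inr hp

end Real

section Norm

variable {E : Type*} [NormedAddCommGroup E] {p ε : ℝ}

theorem exists_norm_rpow_le (hp : 0 < p) (hε : 0 < ε) :
    ∃ C, 0 ≤ C ∧ ∀ x y : E, ‖x‖ ^ p ≤ (1 + ε) * ‖y‖ ^ p + C * ‖x - y‖ ^ p := by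
  obtain ⟨C, hC, h⟩ := Real.exists_add_rpow_le hp hε
  refine ⟨C, hC, fun x y => le_trans ?_ (h _ _ (norm_nonneg y) (norm_nonneg (x - y)))⟩
  gcongr
  simpa using norm_le_insert' x y

theorem exists_norm_rpow_le_add (hp : 0 < p) (hε : 0 < ε) :
    ∃ C, ∀ x y : E, ‖x‖ ^ p ≤ ‖y‖ ^ p + ε * ‖x‖ ^ p + C * ‖x - y‖ ^ p := by
  obtain ⟨C, hC, h⟩ := exists_norm_rpow_le (E := E) hp hε
  refine ⟨C, fun x y => ?_⟩
  rcases le_total ‖y‖ ‖x‖ with hyx | hxy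
  · have : ‖y‖ ^ p ≤ ‖x‖ ^ p := by gcongr
    nlinarith [h x y]
  · have : ‖x‖ ^ p ≤ ‖y‖ ^ p := by gcongr
    have : 0 ≤ ε * ‖x‖ ^ p + C * ‖x - y‖ ^ p := by positivity
    linarith

theorem Filter.Tendsto.isBoundedUnder_norm_sub {ι : Type*} {l : Filter ι} {u : ι → E} {r : ℝ}
    (hu : Tendsto (fun i => ‖u i‖) l (𝓝 r)) (z : E) :
    IsBoundedUnder (· ≤ ·) l fun i => ‖u i - z‖ := by
  obtain ⟨M, hM⟩ := hu.isBoundedUnder_le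
  exact ⟨M + ‖z‖,
    (eventually_map.1 hM).mono fun i hi => (norm_sub_le _ _).trans (by simpa using hi)⟩

theorem Filter.Tendsto.isBoundedUnder_norm_sub_rpow {ι : Type*} {l : Filter ι} {u : ι → E}
    {r : ℝ} (hu : Tendsto (fun i => ‖u i‖) l (𝓝 r)) (z : E) (hp : 0 ≤ p) :
    IsBoundedUnder (· ≤ ·) l fun i => ‖u i - z‖ ^ p := by
  obtain ⟨M, hM⟩ := hu.isBoundedUnder_norm_sub z
  exact ⟨M ^ p, (eventually_map.1 hM).mono fun i hi => Real.rpow_le_rpow (norm_nonneg _) hi hp⟩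

end Norm

section LiminfLimsup

variable {ι : Type*} {l : Filter ι} [l.NeBot] {u v : ι → ℝ}

theorem ENNReal.ofReal_liminf (hu : IsBoundedUnder (· ≤ ·) l u)
    (hu' : IsBoundedUnder (· ≥ ·) l u) :
    ENNReal.ofReal (liminf u l) = liminf (fun i => ENNReal.ofReal (u i)) l :=
  ENNReal.ofReal_mono.map_liminf_of_continuousAt u ENNReal.continuous_ofReal.continuousAt
    hu.isCoboundedUnder_ge hu'

theorem Real.liminf_rpow {p : ℝ} (hp : 0 ≤ p) (hu : IsBoundedUnder (· ≤ ·) l u)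
    (hu0 : ∀ i, 0 ≤ u i) : liminf (fun i => u i ^ p) l = liminf u l ^ p := by
  have h := (Real.monotone_max_zero_rpow hp).map_liminf_of_continuousAt u
    (Real.continuous_max_zero_rpow hp).continuousAt hu.isCoboundedUnder_ge
    (isBoundedUnder_of ⟨0, hu0⟩)
  rw [max_eq_left (le_liminf_of_le hu.isCoboundedUnder_ge (.of_forall hu0))] at h
  simp only [h, Function.comp_def, max_eq_left (hu0 _)]

theorem Real.limsup_rpow {p : ℝ} (hp : 0 ≤ p) (hu : IsBoundedUnder (· ≤ ·) l u)
    (hu0 : ∀ i, 0 ≤ u i) : limsup (fun i => u i ^ p) l = limsup u l ^ p := by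
  have h := (Real.monotone_max_zero_rpow hp).map_limsup_of_continuousAt u
    (Real.continuous_max_zero_rpow hp).continuousAt hu
    (isBoundedUnder_of ⟨0, hu0⟩).isCoboundedUnder_le
  rw [max_eq_left (le_limsup_of_frequently_le (.of_forall hu0) hu)] at h
  simp only [h, Function.comp_def, max_eq_left (hu0 _)]

theorem liminf_le_const_add_liminf {c : ℝ} (h : ∀ i, u i ≤ c + v i)
    (hu : IsBoundedUnder (· ≥ ·) l u) (hv : IsBoundedUnder (· ≤ ·) l v)
    (hv' : IsBoundedUnder (· ≥ ·) l v) :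
    liminf u l ≤ c + liminf v l := by
  rw [← liminf_const_add l v c hv.isCoboundedUnder_ge hv']
  exact liminf_le_liminf (.of_forall h) hu
    (isBoundedUnder_le_add isBoundedUnder_const hv).isCoboundedUnder_ge

theorem liminf_sub_le_limsup_sub_limsup (hv : IsBoundedUnder (· ≤ ·) l v)
    (hv' : IsBoundedUnder (· ≥ ·) l v) (huv : IsBoundedUnder (· ≤ ·) l (u - v))
    (huv' : IsBoundedUnder (· ≥ ·) l (u - v)) :
    liminf (u - v) l ≤ limsup u l - limsup v l := by
  have := le_limsup_add hv hv'.isCoboundedUnder_le huv huv'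
  rw [add_sub_cancel] at this
  linarith

end LiminfLimsup

namespace MeasureTheory

variable {α : Type*} [MeasurableSpace α] {μ : Measure α}

theorem _root_.AEMeasurable.liminf {β : Type*} [MeasurableSpace β] [ConditionallyCompleteLinearOrder β]
    [TopologicalSpace β] [OrderTopology β] [SecondCountableTopology β] [BorelSpace β]
    {f : ℕ → α → β} (hf : ∀ n, AEMeasurable (f n) μ) :
    AEMeasurable (fun x => liminf (f · x) atTop) μ := by
  refine ⟨fun x => Filter.liminf (fun n => (hf n).mk _ x) atTop,
    Measurable.liminf fun n => (hf n).measurable_mk, ?_⟩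
  filter_upwards [ae_all_iff.2 fun n => (hf n).ae_eq_mk] with x hx
  simp only [hx]

theorem MemLp.integrable_norm_rpow_ofReal {E : Type*} [NormedAddCommGroup E] {p : ℝ} {f : α → E}
    (hf : MemLp f (ENNReal.ofReal p) μ) (hp : 0 < p) : Integrable (fun x => ‖f x‖ ^ p) μ := by
  simpa [hp.le] using hf.integrable_norm_rpow (by simpa using hp) ENNReal.ofReal_ne_top

theorem setIntegral_sub_le_integral_sub {f g : α → ℝ} (hf : Integrable f μ) (hg : Integrable g μ)
    (hgf : g ≤ᵐ[μ] f) (s : Set α) :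
    ∫ x in s, f x ∂μ - ∫ x in s, g x ∂μ ≤ ∫ x, f x ∂μ - ∫ x, g x ∂μ := by
  rw [← integral_sub hf.integrableOn hg.integrableOn, ← integral_sub hf hg]
  exact setIntegral_le_integral (hf.sub hg) (hgf.mono fun x hx => sub_nonneg.2 hx)

section Fatou

variable {F : ℕ → α → ℝ}

theorem lintegral_ofReal_liminf_le (hF : ∀ n, Integrable (F n) μ) (hF0 : ∀ n, 0 ≤ᵐ[μ] F n)
    (hbdd : ∀ᵐ x ∂μ, IsBoundedUnder (· ≤ ·) atTop (F · x))
    (hint : IsBoundedUnder (· ≤ ·) atTop fun n => ∫ x, F n x ∂μ) :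
    ∫⁻ x, ENNReal.ofReal (liminf (F · x) atTop) ∂μ ≤
      ENNReal.ofReal (liminf (fun n => ∫ x, F n x ∂μ) atTop) := by
  have hlim : ∀ᵐ x ∂μ, ENNReal.ofReal (liminf (F · x) atTop) =
      liminf (fun n => ENNReal.ofReal (F n x)) atTop := by
    filter_upwards [hbdd, ae_all_iff.2 hF0] with x hx hx0
    exact ENNReal.ofReal_liminf hx (isBoundedUnder_of ⟨0, hx0⟩)
  have hint0 n : 0 ≤ ∫ x, F n x ∂μ := integral_nonneg_of_ae (hF0 n)
  calc ∫⁻ x, ENNReal.ofReal (liminf (F · x) atTop) ∂μ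
      = ∫⁻ x, liminf (fun n => ENNReal.ofReal (F n x)) atTop ∂μ := lintegral_congr_ae hlim
    _ ≤ liminf (fun n => ∫⁻ x, ENNReal.ofReal (F n x) ∂μ) atTop :=
      lintegral_liminf_le' fun n => (hF n).aemeasurable.ennreal_ofReal
    _ = liminf (fun n => ENNReal.ofReal (∫ x, F n x ∂μ)) atTop := by
      simp only [ofReal_integral_eq_lintegral_ofReal (hF _) (hF0 _)]
    _ = ENNReal.ofReal (liminf (fun n => ∫ x, F n x ∂μ) atTop) :=
      (ENNReal.ofReal_liminf hint (isBoundedUnder_of ⟨0, hint0⟩)).symm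

theorem liminf_nonneg_ae (hF0 : ∀ n, 0 ≤ᵐ[μ] F n)
    (hbdd : ∀ᵐ x ∂μ, IsBoundedUnder (· ≤ ·) atTop (F · x)) :
    0 ≤ᵐ[μ] fun x => liminf (F · x) atTop := by
  filter_upwards [hbdd, ae_all_iff.2 hF0] with x hx hx0
  exact le_liminf_of_le hx.isCoboundedUnder_ge (.of_forall hx0)

theorem integrable_liminf (hF : ∀ n, Integrable (F n) μ) (hF0 : ∀ n, 0 ≤ᵐ[μ] F n)
    (hbdd : ∀ᵐ x ∂μ, IsBoundedUnder (· ≤ ·) atTop (F · x))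
    (hint : IsBoundedUnder (· ≤ ·) atTop fun n => ∫ x, F n x ∂μ) :
    Integrable (fun x => liminf (F · x) atTop) μ := by
  refine ⟨(AEMeasurable.liminf fun n => (hF n).aemeasurable).aestronglyMeasurable, ?_⟩
  rw [hasFiniteIntegral_iff_ofReal (liminf_nonneg_ae hF0 hbdd)]
  exact (lintegral_ofReal_liminf_le hF hF0 hbdd hint).trans_lt ENNReal.ofReal_lt_top

theorem integral_liminf_le (hF : ∀ n, Integrable (F n) μ) (hF0 : ∀ n, 0 ≤ᵐ[μ] F n)
    (hbdd : ∀ᵐ x ∂μ, IsBoundedUnder (· ≤ ·) atTop (F · x))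
    (hint : IsBoundedUnder (· ≤ ·) atTop fun n => ∫ x, F n x ∂μ) :
    ∫ x, liminf (F · x) atTop ∂μ ≤ liminf (fun n => ∫ x, F n x ∂μ) atTop := by
  rw [integral_eq_lintegral_of_nonneg_ae (liminf_nonneg_ae hF0 hbdd)
    (integrable_liminf hF hF0 hbdd hint).aestronglyMeasurable]
  refine ENNReal.toReal_le_of_le_ofReal ?_ (lintegral_ofReal_liminf_le hF hF0 hbdd hint)
  exact le_liminf_of_le hint.isCoboundedUnder_ge
    (.of_forall fun n => integral_nonneg_of_ae (hF0 n))

theorem integral_liminf_add_le {u v : ℕ → α → ℝ} {w : α → ℝ}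
    (hu : ∀ n, Integrable (u n) μ) (hv : ∀ n, Integrable (v n) μ) (hw : Integrable w μ)
    (hu_liminf : Integrable (fun x => liminf (u · x) atTop) μ)
    (hu0 : ∀ n, 0 ≤ᵐ[μ] u n) (huv0 : ∀ n, 0 ≤ᵐ[μ] u n + v n)
    (hu_bdd : ∀ᵐ x ∂μ, IsBoundedUnder (· ≤ ·) atTop (u · x))
    (hvw : ∀ᵐ x ∂μ, Tendsto (v · x) atTop (𝓝 (w x)))
    (hint : IsBoundedUnder (· ≤ ·) atTop fun n => ∫ x, u n x ∂μ + ∫ x, v n x ∂μ) :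
    ∫ x, liminf (u · x) atTop ∂μ + ∫ x, w x ∂μ ≤
      liminf (fun n => ∫ x, u n x ∂μ + ∫ x, v n x ∂μ) atTop := by
  have huv n : Integrable (u n + v n) μ := (hu n).add (hv n)
  simp only [← integral_add (hu _) (hv _)] at hint ⊢
  have hbdd : ∀ᵐ x ∂μ, IsBoundedUnder (· ≤ ·) atTop fun n => u n x + v n x := by
    filter_upwards [hu_bdd, hvw] with x hux hvx
    exact isBoundedUnder_le_add hux hvx.isBoundedUnder_le
  have hle : ∀ᵐ x ∂μ, liminf (u · x) atTop + w x ≤ liminf (fun n => u n x + v n x) atTop := by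
    filter_upwards [hu_bdd, hvw, ae_all_iff.2 hu0] with x hux hvx hux0
    rw [← hvx.liminf_eq]
    exact le_liminf_add (isBoundedUnder_of ⟨0, hux0⟩) hux hvx.isBoundedUnder_ge
      hvx.isBoundedUnder_le.isCoboundedUnder_ge
  calc ∫ x, liminf (u · x) atTop ∂μ + ∫ x, w x ∂μ
      = ∫ x, liminf (u · x) atTop + w x ∂μ := (integral_add hu_liminf hw).symm
    _ ≤ ∫ x, liminf (fun n => u n x + v n x) atTop ∂μ :=
      integral_mono_ae (hu_liminf.add hw) (integrable_liminf huv huv0 hbdd hint) hle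
    _ ≤ liminf (fun n => ∫ x, u n x + v n x ∂μ) atTop := integral_liminf_le huv huv0 hbdd hint

end Fatou

section BrezisLieb

variable {α E : Type*} [MeasurableSpace α] {μ : Measure α} [NormedAddCommGroup E] {p : ℝ}
  {f : ℕ → α → E} {f₀ : α → E} {g : α → ℝ}

theorem exists_integral_norm_sub_rpow_le (hp : 0 < p) (hf : ∀ n, MemLp (f n) (.ofReal p) μ)
    (hf₀ : MemLp f₀ (.ofReal p) μ) {M : ℝ} (hM : ∀ n, ∫ t, ‖f n t‖ ^ p ∂μ ≤ M) :
    ∃ M', ∀ n, ∫ t, ‖f n t - f₀ t‖ ^ p ∂μ ≤ M' := by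
  obtain ⟨C, -, hC⟩ := exists_norm_rpow_le (E := E) hp one_pos
  refine ⟨(1 + 1) * M + C * ∫ t, ‖f₀ t‖ ^ p ∂μ, fun n => ?_⟩
  have hfn := (hf n).integrable_norm_rpow_ofReal hp
  have hf₀' := hf₀.integrable_norm_rpow_ofReal hp
  calc ∫ t, ‖f n t - f₀ t‖ ^ p ∂μ ≤ ∫ t, (1 + 1) * ‖f n t‖ ^ p + C * ‖f₀ t‖ ^ p ∂μ := by
        refine integral_mono (((hf n).sub hf₀).integrable_norm_rpow_ofReal hp)
          ((hfn.const_mul _).add (hf₀'.const_mul _)) fun t => ?_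
        simpa using hC (f n t - f₀ t) (f n t)
    _ = (1 + 1) * ∫ t, ‖f n t‖ ^ p ∂μ + C * ∫ t, ‖f₀ t‖ ^ p ∂μ := by
        rw [integral_add (hfn.const_mul _) (hf₀'.const_mul _), integral_const_mul,
          integral_const_mul]
    _ ≤ (1 + 1) * M + C * ∫ t, ‖f₀ t‖ ^ p ∂μ := by gcongr; exact hM n

theorem integrable_liminf_norm_sub_rpow (hp : 0 < p) (hf : ∀ n, MemLp (f n) (.ofReal p) μ)
    (hf₀ : MemLp f₀ (.ofReal p) μ) (hconv : ∀ᵐ t ∂μ, Tendsto (fun n => ‖f n t‖) atTop (𝓝 (g t)))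
    {M : ℝ} (hM : ∀ n, ∫ t, ‖f n t - f₀ t‖ ^ p ∂μ ≤ M) :
    Integrable (fun t => liminf (fun n => ‖f n t - f₀ t‖ ^ p) atTop) μ :=
  integrable_liminf (fun n => ((hf n).sub hf₀).integrable_norm_rpow_ofReal hp)
    (fun n => .of_forall fun t => by positivity)
    (hconv.mono fun t ht => ht.isBoundedUnder_norm_sub_rpow _ hp.le) (isBoundedUnder_of ⟨M, hM⟩)

theorem integral_liminf_sub_le_add_mul (hp : 0 < p) (hf : ∀ n, MemLp (f n) (.ofReal p) μ)
    (hf₀ : MemLp f₀ (.ofReal p) μ) (hg : Integrable (fun t => g t ^ p) μ)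
    (hconv : ∀ᵐ t ∂μ, Tendsto (fun n => ‖f n t‖) atTop (𝓝 (g t)))
    {Ma Mb : ℝ} (ha : ∀ n, ∫ t, ‖f n t - f₀ t‖ ^ p ∂μ ≤ Ma) (hb : ∀ n, ∫ t, ‖f n t‖ ^ p ∂μ ≤ Mb)
    {ε : ℝ} (hε : 0 < ε) :
    ∫ t, liminf (fun n => ‖f n t - f₀ t‖ ^ p) atTop ∂μ - ∫ t, g t ^ p ∂μ ≤
      liminf (fun n => ∫ t, ‖f n t - f₀ t‖ ^ p ∂μ - ∫ t, ‖f n t‖ ^ p ∂μ) atTop + ε * Mb := by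
  obtain ⟨C, hC⟩ := exists_norm_rpow_le_add (E := E) hp hε
  set a := fun n => ∫ t, ‖f n t - f₀ t‖ ^ p ∂μ
  set b := fun n => ∫ t, ‖f n t‖ ^ p ∂μ
  set I₀ := ∫ t, ‖f₀ t‖ ^ p ∂μ
  have ha' n : Integrable (fun t => ‖f n t - f₀ t‖ ^ p) μ :=
    ((hf n).sub hf₀).integrable_norm_rpow_ofReal hp
  have hb' n : Integrable (fun t => ‖f n t‖ ^ p) μ := (hf n).integrable_norm_rpow_ofReal hp
  have hI₀ : Integrable (fun t => ‖f₀ t‖ ^ p) μ := hf₀.integrable_norm_rpow_ofReal hp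
  have ha0 n : 0 ≤ a n := integral_nonneg fun t => by positivity
  have hb0 n : 0 ≤ b n := integral_nonneg fun t => by positivity
  have hv n : ∫ t, C * ‖f₀ t‖ ^ p - (1 - ε) * ‖f n t‖ ^ p ∂μ = C * I₀ - (1 - ε) * b n := by
    rw [integral_sub (hI₀.const_mul _) ((hb' n).const_mul _), integral_const_mul,
      integral_const_mul]
  have hfatou := integral_liminf_add_le (u := fun n t => ‖f n t - f₀ t‖ ^ p)
    (v := fun n t => C * ‖f₀ t‖ ^ p - (1 - ε) * ‖f n t‖ ^ p)
    (w := fun t => C * ‖f₀ t‖ ^ p - (1 - ε) * g t ^ p) ha'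
    (fun n => (hI₀.const_mul _).sub ((hb' n).const_mul _)) ((hI₀.const_mul _).sub (hg.const_mul _))
    (integrable_liminf_norm_sub_rpow hp hf hf₀ hconv ha)
    (fun n => .of_forall fun t => by positivity)
    (fun n => .of_forall fun t => by
      have := hC (f n t) (f n t - f₀ t)
      simp only [sub_sub_cancel] at this
      simp only [Pi.add_apply, Pi.zero_apply]
      linarith)
    (hconv.mono fun t ht => ht.isBoundedUnder_norm_sub_rpow _ hp.le)
    (hconv.mono fun t ht => tendsto_const_nhds.sub ((ht.rpow_const (Or.inr hp.le)).const_mul _))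
    (isBoundedUnder_of ⟨Ma + C * I₀ + ε * Mb, fun n => by
      simp only [hv]; nlinarith [ha n, hb0 n, hb n]⟩)
  rw [integral_sub (hI₀.const_mul _) (hg.const_mul _), integral_const_mul, integral_const_mul]
    at hfatou
  simp only [hv] at hfatou
  have hlim : liminf (fun n => a n + (C * I₀ - (1 - ε) * b n)) atTop ≤
      (C * I₀ + ε * Mb) + liminf (fun n => a n - b n) atTop :=
    liminf_le_const_add_liminf (fun n => by nlinarith [hb0 n, hb n])
      (isBoundedUnder_of ⟨C * I₀ - Mb, fun n => by nlinarith [ha0 n, hb0 n, hb n]⟩)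
      (isBoundedUnder_of ⟨Ma, fun n => by linarith [ha n, hb0 n]⟩)
      (isBoundedUnder_of ⟨-Mb, fun n => by linarith [ha0 n, hb n]⟩)
  have hg0 : 0 ≤ ∫ t, g t ^ p ∂μ := integral_nonneg_of_ae <| hconv.mono fun t ht =>
    Real.rpow_nonneg (ge_of_tendsto' ht fun n => norm_nonneg _) p
  linarith [mul_nonneg hε.le hg0]

theorem integral_liminf_sub_le_liminf_sub (hp : 0 < p) (hf : ∀ n, MemLp (f n) (.ofReal p) μ)
    (hf₀ : MemLp f₀ (.ofReal p) μ) (hg : Integrable (fun t => g t ^ p) μ)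
    (hconv : ∀ᵐ t ∂μ, Tendsto (fun n => ‖f n t‖) atTop (𝓝 (g t)))
    {Ma Mb : ℝ} (ha : ∀ n, ∫ t, ‖f n t - f₀ t‖ ^ p ∂μ ≤ Ma) (hb : ∀ n, ∫ t, ‖f n t‖ ^ p ∂μ ≤ Mb) :
    ∫ t, liminf (fun n => ‖f n t - f₀ t‖ ^ p) atTop ∂μ - ∫ t, g t ^ p ∂μ ≤
      liminf (fun n => ∫ t, ‖f n t - f₀ t‖ ^ p ∂μ - ∫ t, ‖f n t‖ ^ p ∂μ) atTop := by
  set L := liminf (fun n => ∫ t, ‖f n t - f₀ t‖ ^ p ∂μ - ∫ t, ‖f n t‖ ^ p ∂μ) atTop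
  have hlim : Tendsto (fun ε => L + ε * Mb) (𝓝[>] 0) (𝓝 L) :=
    tendsto_nhdsWithin_of_tendsto_nhds <| Continuous.tendsto' (by fun_prop) _ _ (by simp)
  exact ge_of_tendsto hlim (eventually_nhdsWithin_of_forall fun ε hε =>
    integral_liminf_sub_le_add_mul hp hf hf₀ hg hconv ha hb hε)

end BrezisLieb

end MeasureTheory

section Opial

variable {X : Type*} [NormedAddCommGroup X] [NormedSpace ℝ X]

variable (X) in
def NonstrictOpial : Prop :=
  ∀ u : ℕ → X, WeaklyNull u → ∀ z : X,
    limsup (fun n => ‖u n‖) atTop ≤ limsup (fun n => ‖u n - z‖) atTop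

theorem WeaklyNull.comp_strictMono {u : ℕ → X} (hu : WeaklyNull u) {ψ : ℕ → ℕ}
    (hψ : StrictMono ψ) : WeaklyNull (u ∘ ψ) :=
  fun φ => (hu φ).comp hψ.tendsto_atTop

theorem NonstrictOpial.le_liminf_norm_sub (hX : NonstrictOpial X) {u : ℕ → X}
    (hu : WeaklyNull u) {r : ℝ} (hr : Tendsto (fun n => ‖u n‖) atTop (𝓝 r)) (z : X) :
    r ≤ liminf (fun n => ‖u n - z‖) atTop := by
  by_contra! hlt
  obtain ⟨c, hlc, hcr⟩ := exists_between hlt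
  obtain ⟨ψ, hψ, hψc⟩ := extraction_of_frequently_atTop <|
    frequently_lt_of_liminf_lt (hr.isBoundedUnder_norm_sub z).isCoboundedUnder_ge hlc
  have hrψ : Tendsto (fun n => ‖(u ∘ ψ) n‖) atTop (𝓝 r) := hr.comp hψ.tendsto_atTop
  have h := hX _ (hu.comp_strictMono hψ) z
  rw [hrψ.limsup_eq] at h
  have : limsup (fun n => ‖(u ∘ ψ) n - z‖) atTop ≤ c :=
    limsup_le_of_le (isBoundedUnder_of ⟨0, fun n => norm_nonneg _⟩).isCoboundedUnder_le
      (.of_forall fun n => (hψc n).le)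
  exact hcr.not_ge (h.trans this)

variable {α : Type*} [MeasurableSpace α] {μ : Measure α} {p : ℝ} {f : ℕ → α → X} {g : α → ℝ}

theorem NonstrictOpial.ae_rpow_le_liminf_norm_sub_rpow (hX : NonstrictOpial X) (hp : 0 ≤ p)
    (hweak : ∀ᵐ t ∂μ, WeaklyNull (f · t))
    (hconv : ∀ᵐ t ∂μ, Tendsto (fun n => ‖f n t‖) atTop (𝓝 (g t))) (f₀ : α → X) :
    ∀ᵐ t ∂μ, g t ^ p ≤ liminf (fun n => ‖f n t - f₀ t‖ ^ p) atTop := by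
  filter_upwards [hweak, hconv] with t hw hc
  rw [Real.liminf_rpow hp (hc.isBoundedUnder_norm_sub _) fun n => norm_nonneg _]
  exact Real.rpow_le_rpow (ge_of_tendsto' hc fun n => norm_nonneg _)
    (hX.le_liminf_norm_sub hw hc _) hp

theorem NonstrictOpial.setIntegral_liminf_sub_le (hX : NonstrictOpial X) (hp : 0 < p)
    (hf : ∀ n, MemLp (f n) (.ofReal p) μ) {M : ℝ} (hM : ∀ n, ∫ t, ‖f n t‖ ^ p ∂μ ≤ M)
    (hweak : ∀ᵐ t ∂μ, WeaklyNull (f · t)) (hg : Integrable (fun t => g t ^ p) μ)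
    (hconv : ∀ᵐ t ∂μ, Tendsto (fun n => ‖f n t‖) atTop (𝓝 (g t)))
    {f₀ : α → X} (hf₀ : MemLp f₀ (.ofReal p) μ) (A : Set α) :
    ∫ t in A, liminf (fun n => ‖f n t - f₀ t‖ ^ p) atTop ∂μ - ∫ t in A, g t ^ p ∂μ ≤
      limsup (fun n => ∫ t, ‖f n t - f₀ t‖ ^ p ∂μ) atTop -
        limsup (fun n => ∫ t, ‖f n t‖ ^ p ∂μ) atTop := by
  obtain ⟨Ma, hMa⟩ := exists_integral_norm_sub_rpow_le hp hf hf₀ hM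
  have ha0 n : 0 ≤ ∫ t, ‖f n t - f₀ t‖ ^ p ∂μ := integral_nonneg fun t => by positivity
  have hb0 n : 0 ≤ ∫ t, ‖f n t‖ ^ p ∂μ := integral_nonneg fun t => by positivity
  calc _ ≤ ∫ t, liminf (fun n => ‖f n t - f₀ t‖ ^ p) atTop ∂μ - ∫ t, g t ^ p ∂μ :=
        setIntegral_sub_le_integral_sub (integrable_liminf_norm_sub_rpow hp hf hf₀ hconv hMa)
          hg (hX.ae_rpow_le_liminf_norm_sub_rpow hp.le hweak hconv f₀) A
    _ ≤ _ := integral_liminf_sub_le_liminf_sub hp hf hf₀ hg hconv hMa hM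
    _ ≤ _ := liminf_sub_le_limsup_sub_limsup (isBoundedUnder_of ⟨M, hM⟩)
        (isBoundedUnder_of ⟨0, hb0⟩)
        (isBoundedUnder_of ⟨Ma, fun n => by simp only [Pi.sub_apply]; linarith [hMa n, hb0 n]⟩)
        (isBoundedUnder_of ⟨-M, fun n => by simp only [Pi.sub_apply]; linarith [ha0 n, hM n]⟩)

theorem NonstrictOpial.limsup_integral_rpow_le (hX : NonstrictOpial X) (hp : 0 < p)
    (hf : ∀ n, MemLp (f n) (.ofReal p) μ) {M : ℝ} (hM : ∀ n, ∫ t, ‖f n t‖ ^ p ∂μ ≤ M)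
    (hweak : ∀ᵐ t ∂μ, WeaklyNull (f · t)) (hg : Integrable (fun t => g t ^ p) μ)
    (hconv : ∀ᵐ t ∂μ, Tendsto (fun n => ‖f n t‖) atTop (𝓝 (g t)))
    {f₀ : α → X} (hf₀ : MemLp f₀ (.ofReal p) μ) :
    limsup (fun n => (∫ t, ‖f n t‖ ^ p ∂μ) ^ (1 / p)) atTop ≤
      limsup (fun n => (∫ t, ‖f n t - f₀ t‖ ^ p ∂μ) ^ (1 / p)) atTop := by
  obtain ⟨Ma, hMa⟩ := exists_integral_norm_sub_rpow_le hp hf hf₀ hM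
  have ha0 n : 0 ≤ ∫ t, ‖f n t - f₀ t‖ ^ p ∂μ := integral_nonneg fun t => by positivity
  have hb0 n : 0 ≤ ∫ t, ‖f n t‖ ^ p ∂μ := integral_nonneg fun t => by positivity
  have h := hX.setIntegral_liminf_sub_le hp hf hM hweak hg hconv hf₀ ∅
  simp only [Measure.restrict_empty, integral_zero_measure, sub_self, sub_nonneg] at h
  rw [Real.limsup_rpow (by positivity) (isBoundedUnder_of ⟨M, hM⟩) hb0,
    Real.limsup_rpow (by positivity) (isBoundedUnder_of ⟨Ma, hMa⟩) ha0]
  exact Real.rpow_le_rpow (le_limsup_of_frequently_le (.of_forall hb0) (isBoundedUnder_of ⟨M, hM⟩))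
    h (by positivity)

end Opial

theorem statement17_general {S : Type*} [MeasurableSpace S] (μ : Measure S)
    (p : ℝ) (hp : 1 ≤ p)
    (X : Type*) [NormedAddCommGroup X] [NormedSpace ℝ X]
    (hOp : ∀ u : ℕ → X, WeaklyNull u → ∀ z : X,
      limsup (fun n => ‖u n‖) atTop ≤ limsup (fun n => ‖u n - z‖) atTop)
    (f : ℕ → S → X) (hf : ∀ n, MemLp (f n) (ENNReal.ofReal p) μ)
    (hbdd : ∃ C : ℝ, ∀ n, (∫ t, ‖f n t‖ ^ p ∂μ) ≤ C)
    (hweak : ∀ᵐ t ∂μ, ∀ φ : X →L[ℝ] ℝ, Tendsto (fun n => φ (f n t)) atTop (𝓝 0))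
    (g : S → ℝ) (hg : MemLp g (ENNReal.ofReal p) μ)
    (hconv : ∀ᵐ t ∂μ, Tendsto (fun n => ‖f n t‖) atTop (𝓝 (g t))) :
    (∀ f₀ : S → X, MemLp f₀ (ENNReal.ofReal p) μ → ∀ A : Set S, MeasurableSet A →
      (∫ t in A, liminf (fun n => ‖f n t - f₀ t‖ ^ p) atTop ∂μ) - (∫ t in A, g t ^ p ∂μ) ≤
        limsup (fun n => ∫ t, ‖f n t - f₀ t‖ ^ p ∂μ) atTop -
          limsup (fun n => ∫ t, ‖f n t‖ ^ p ∂μ) atTop) ∧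
    (∀ f₀ : S → X, MemLp f₀ (ENNReal.ofReal p) μ →
      limsup (fun n => (∫ t, ‖f n t‖ ^ p ∂μ) ^ (1 / p)) atTop ≤
        limsup (fun n => (∫ t, ‖f n t - f₀ t‖ ^ p ∂μ) ^ (1 / p)) atTop) := by
  have hp0 : 0 < p := by linarith
  have hX : NonstrictOpial X := hOp
  obtain ⟨M, hM⟩ := hbdd
  have hg0 : ∀ᵐ t ∂μ, 0 ≤ g t := hconv.mono fun t ht => ge_of_tendsto' ht fun n => norm_nonneg _
  have hgp : Integrable (fun t => g t ^ p) μ := (hg.integrable_norm_rpow_ofReal hp0).congr <|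
    hg0.mono fun t ht => by simp only [Real.norm_of_nonneg ht]
  exact ⟨fun f₀ hf₀ A _ => hX.setIntegral_liminf_sub_le hp0 hf hM hweak hgp hconv hf₀ A,
    fun f₀ hf₀ => hX.limsup_integral_rpow_le hp0 hf hM hweak hgp hconv hf₀⟩

/-- Opial-type inequality in Lebesgue–Bochner spaces `L^p(μ,X)` for a Banach space `X` with the
nonstrict Opial property: for a bounded sequence `(f n)` in `L^p(μ,X)` converging weakly to `0`
pointwise a.e. and with `‖f n t‖ → g t` a.e., for every `f₀ ∈ L^p(μ,X)` and measurable `A`,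
`∫_A liminf ‖f n - f₀‖^p dμ - ∫_A g^p dμ ≤ limsup ‖f n - f₀‖_p^p - limsup ‖f n‖_p^p`;
in particular `limsup ‖f n‖_p ≤ limsup ‖f n - f₀‖_p`. -/
theorem statement17 {S : Type*} [MeasurableSpace S] (μ : Measure S)
    [IsFiniteMeasure μ] [μ.IsComplete] (p : ℝ) (hp : 1 ≤ p)
    (X : Type*) [NormedAddCommGroup X] [NormedSpace ℝ X] [CompleteSpace X]
    (hOp : ∀ u : ℕ → X, WeaklyNull u → ∀ z : X,
      limsup (fun n => ‖u n‖) atTop ≤ limsup (fun n => ‖u n - z‖) atTop)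
    (f : ℕ → S → X) (hf : ∀ n, MemLp (f n) (ENNReal.ofReal p) μ)
    (hbdd : ∃ C : ℝ, ∀ n, (∫ t, ‖f n t‖ ^ p ∂μ) ≤ C)
    (hweak : ∀ᵐ t ∂μ, ∀ φ : X →L[ℝ] ℝ, Tendsto (fun n => φ (f n t)) atTop (𝓝 0))
    (g : S → ℝ) (hg : MemLp g (ENNReal.ofReal p) μ)
    (hconv : ∀ᵐ t ∂μ, Tendsto (fun n => ‖f n t‖) atTop (𝓝 (g t))) :
    (∀ f₀ : S → X, MemLp f₀ (ENNReal.ofReal p) μ → ∀ A : Set S, MeasurableSet A →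
      (∫ t in A, liminf (fun n => ‖f n t - f₀ t‖ ^ p) atTop ∂μ) - (∫ t in A, g t ^ p ∂μ) ≤
        limsup (fun n => ∫ t, ‖f n t - f₀ t‖ ^ p ∂μ) atTop -
          limsup (fun n => ∫ t, ‖f n t‖ ^ p ∂μ) atTop) ∧
    (∀ f₀ : S → X, MemLp f₀ (ENNReal.ofReal p) μ →
      limsup (fun n => (∫ t, ‖f n t‖ ^ p ∂μ) ^ (1 / p)) atTop ≤
        limsup (fun n => (∫ t, ‖f n t - f₀ t‖ ^ p ∂μ) ^ (1 / p)) atTop) :=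
  statement17_general μ p hp X hOp f hf hbdd hweak g hg hconv
end

section
/- Let (S,𝒜,μ) be a complete, finite measure space, 1 ≤ p < ∞ and X a real Banach space with the uniform Opial property. Let M, R > 0 and f ∈ L^p(μ,X) with f ≠ 0. Then there exists η > 0 such that the following holds: whenever (f_n)_{n∈ℕ} is a sequence in L^p(μ,X) with sup_n ‖f_n‖_p ≤ R such that for almost every t ∈ S the sequence (f_n(t))_{n∈ℕ} converges weakly to zero in X and the limit lim_n ‖f_n(t)‖ exists and is at most M, then limsup_n ‖f_n‖_p + η ≤ limsup_n ‖f_n − f‖_p. -/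
open Filter Topology MeasureTheory
open scoped ENNReal ZeroAtInfty

/-!
Since `f₀ ≠ 0`, some level set `A = {ε ≤ ‖f₀‖}` has positive measure. At almost every `t` the
uniform Opial property, applied to the weakly null sequence `f n t` and the point `f₀ t`, gives
`liminf ‖f n t - f₀ t‖ ≥ lim ‖f n t‖ + η₀ 1_A(t)`, hence an asymptotic pointwise gap
`‖f n t - f₀ t‖ ^ p - ‖f n t‖ ^ p ≳ η₀ ^ p 1_A(t)`. Fatou's lemma, applied Brezis–Lieb style
after adding `ε ‖f n - f₀‖ ^ p + C_ε ‖f₀‖ ^ p` (from `(x + y) ^ p ≤ (1 + ε) x ^ p + C_ε y ^ p`)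
to make the integrands nonnegative, integrates the gap: eventually
`‖f n - f₀‖_p ^ p ≥ ‖f n‖_p ^ p + η₀ ^ p μ(A) / 2`. As `‖f n‖_p ≤ R`, a fixed gain in `p`-th
powers is a fixed gain `η > 0` in norms.
-/

theorem exists_rpow_add_le {p : ℝ} (hp : 1 ≤ p) {ε : ℝ} (hε : 0 < ε) :
    ∃ C ≥ 0, ∀ x y : ℝ, 0 ≤ x → 0 ≤ y → (x + y) ^ p ≤ (1 + ε) * x ^ p + C * y ^ p := by
  have hnear : ∀ᶠ l in 𝓝[<] (1 : ℝ), l ^ (1 - p) < 1 + ε :=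
    ((Real.continuousAt_rpow_const 1 (1 - p) (Or.inl one_ne_zero)).eventually
      (gt_mem_nhds (by simpa using hε))).filter_mono nhdsWithin_le_nhds
  obtain ⟨l, hl, hl0, hl1⟩ := (hnear.and (Ioo_mem_nhdsLT zero_lt_one)).exists
  have hl' : 0 < 1 - l := sub_pos.2 hl1
  refine ⟨(1 - l) ^ (1 - p), Real.rpow_nonneg hl'.le _, fun x y hx hy => ?_⟩
  -- `x + y` is the convex combination of `x / l` and `y / (1 - l)` with weights `l`, `1 - l`.
  have hweight : ∀ {c z : ℝ}, 0 < c → 0 ≤ z → c * (z / c) ^ p = c ^ (1 - p) * z ^ p := by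
    intro c z hc hz
    rw [Real.div_rpow hz hc.le, Real.rpow_sub hc, Real.rpow_one]
    field_simp
  have hconv := (convexOn_rpow hp).2 (Set.mem_Ici.2 (div_nonneg hx hl0.le))
    (Set.mem_Ici.2 (div_nonneg hy hl'.le)) hl0.le hl'.le (by ring)
  simp only [smul_eq_mul, mul_div_cancel₀ _ hl0.ne', mul_div_cancel₀ _ hl'.ne',
    hweight hl0 hx, hweight hl' hy] at hconv
  calc (x + y) ^ p ≤ l ^ (1 - p) * x ^ p + (1 - l) ^ (1 - p) * y ^ p := hconv
    _ ≤ (1 + ε) * x ^ p + (1 - l) ^ (1 - p) * y ^ p := by gcongr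

theorem exists_pos_forall_add_rpow_le {p : ℝ} (hp : 0 < p) (R : ℝ) {c : ℝ} (hc : 0 < c) :
    ∃ η > 0, ∀ s ∈ Set.Icc 0 R, (s + η) ^ p ≤ s ^ p + c := by
  obtain ⟨δ, hδ, hδc⟩ := Metric.uniformContinuousOn_iff.1
    ((isCompact_Icc (a := (0 : ℝ)) (b := R + 1)).uniformContinuousOn_of_continuous
      (Real.continuous_rpow_const hp.le).continuousOn) c hc
  refine ⟨min (δ / 2) 1, by positivity, fun s ⟨hs0, hsR⟩ => ?_⟩
  have hη1 : min (δ / 2) 1 ≤ 1 := min_le_right _ _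
  have hηδ : min (δ / 2) 1 < δ := (min_le_left _ _).trans_lt (half_lt_self hδ)
  have hclose := hδc (s + min (δ / 2) 1) ⟨by positivity, by linarith⟩ s ⟨hs0, by linarith⟩
    (by rw [Real.dist_eq, add_sub_cancel_left, abs_of_pos (by positivity)]; exact hηδ)
  rw [Real.dist_eq] at hclose
  linarith [le_abs_self ((s + min (δ / 2) 1) ^ p - s ^ p)]

theorem eventually_lt_rpow_of_le_liminf {ι : Type*} {l : Filter ι} {p : ℝ} (hp : 0 < p)
    {w : ι → ℝ} (hw : ∀ i, 0 ≤ w i) {b : ℝ} (hb : 0 ≤ b) (hbw : b ≤ liminf w l) {y : ℝ}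
    (hy : y < b ^ p) : ∀ᶠ i in l, y < w i ^ p := by
  rcases lt_or_ge y 0 with hy0 | hy0
  · exact Eventually.of_forall fun i => hy0.trans_le (Real.rpow_nonneg (hw i) p)
  · have hyb : y ^ p⁻¹ < b := (Real.rpow_inv_lt_iff_of_pos hy0 hb hp).2 hy
    filter_upwards [eventually_lt_of_lt_liminf (hyb.trans_le hbw) (isBoundedUnder_of ⟨0, hw⟩)]
      with i hi
    exact (Real.rpow_inv_lt_iff_of_pos hy0 (hw i) hp).1 hi

theorem eventually_lt_rpow_sub_rpow {ι : Type*} {l : Filter ι} {p : ℝ} (hp : 1 ≤ p)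
    {u w : ι → ℝ} {L η : ℝ} (hL : 0 ≤ L) (hη : 0 ≤ η) (hu : Tendsto u l (𝓝 L))
    (hw : ∀ i, 0 ≤ w i) (hLw : L + η ≤ liminf w l) {y : ℝ} (hy : y < η ^ p) :
    ∀ᶠ i in l, y < w i ^ p - u i ^ p := by
  have hp0 : 0 < p := by linarith
  have hsuper : L ^ p + η ^ p ≤ (L + η) ^ p := Real.add_rpow_le_rpow_add hL hη hp
  have hw' : ∀ᶠ i in l, L ^ p + (η ^ p + y) / 2 < w i ^ p :=
    eventually_lt_rpow_of_le_liminf hp0 hw (by positivity) hLw (by linarith)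
  have hu' : ∀ᶠ i in l, u i ^ p < L ^ p + (η ^ p - y) / 2 :=
    (hu.rpow_const (Or.inr hp0.le)).eventually (gt_mem_nhds (by linarith))
  filter_upwards [hw', hu'] with i h1 h2
  linarith

-- In `ℝ`, `∀ y < a, ∀ᶠ n, y < u n` replaces `a ≤ liminf u`, which is junk for unbounded `u`.
theorem ENNReal.ofReal_le_liminf_ofReal {ι : Type*} {l : Filter ι} {u : ι → ℝ} {a : ℝ}
    (h : ∀ y < a, ∀ᶠ i in l, y < u i) :
    ENNReal.ofReal a ≤ liminf (fun i => ENNReal.ofReal (u i)) l := by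
  rw [le_liminf_iff]
  intro z hz
  have hz' : z.toReal < a := (ENNReal.lt_ofReal_iff_toReal_lt hz.ne_top).1 hz
  filter_upwards [h _ hz'] with i hi
  exact (ENNReal.lt_ofReal_iff_toReal_lt hz.ne_top).2 hi

section Integrals

variable {S : Type*} [MeasurableSpace S] {μ : Measure S}

theorem eventually_lt_integral_of_forall_lt_eventually {Φ : ℕ → S → ℝ} {g : S → ℝ}
    (hΦ : ∀ n, Integrable (Φ n) μ) (hΦ0 : ∀ n, 0 ≤ᵐ[μ] Φ n) (hg : Integrable g μ)
    (hg0 : 0 ≤ᵐ[μ] g) (hlim : ∀ᵐ t ∂μ, ∀ y < g t, ∀ᶠ n in atTop, y < Φ n t) {y : ℝ}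
    (hy : y < ∫ t, g t ∂μ) : ∀ᶠ n in atTop, y < ∫ t, Φ n t ∂μ := by
  have hfatou : ENNReal.ofReal (∫ t, g t ∂μ) ≤
      liminf (fun n => ENNReal.ofReal (∫ t, Φ n t ∂μ)) atTop := calc
    ENNReal.ofReal (∫ t, g t ∂μ) = ∫⁻ t, ENNReal.ofReal (g t) ∂μ :=
      ofReal_integral_eq_lintegral_ofReal hg hg0
    _ ≤ ∫⁻ t, liminf (fun n => ENNReal.ofReal (Φ n t)) atTop ∂μ :=
      lintegral_mono_ae (hlim.mono fun t ht => ENNReal.ofReal_le_liminf_ofReal ht)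
    _ ≤ liminf (fun n => ∫⁻ t, ENNReal.ofReal (Φ n t) ∂μ) atTop :=
      lintegral_liminf_le' fun n => (hΦ n).aemeasurable.ennreal_ofReal
    _ = liminf (fun n => ENNReal.ofReal (∫ t, Φ n t ∂μ)) atTop := by
      simp_rw [ofReal_integral_eq_lintegral_ofReal (hΦ _) (hΦ0 _)]
  rcases lt_or_ge y 0 with hy0 | hy0
  · exact Eventually.of_forall fun n => hy0.trans_le (integral_nonneg_of_ae (hΦ0 n))
  · have hlt : ENNReal.ofReal y < ENNReal.ofReal (∫ t, g t ∂μ) :=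
      (ENNReal.ofReal_lt_ofReal_iff (hy0.trans_lt hy)).2 hy
    filter_upwards [eventually_lt_of_lt_liminf (hlt.trans_le hfatou)] with n hn
    exact (ENNReal.ofReal_lt_ofReal_iff_of_nonneg hy0).1 hn

variable {X : Type*} [NormedAddCommGroup X]

theorem MeasureTheory.MemLp.integrable_norm_rpow_ofReal_s19 {p : ℝ} (hp : 0 < p) {f : S → X}
    (hf : MemLp f (ENNReal.ofReal p) μ) : Integrable (fun t => ‖f t‖ ^ p) μ := by
  simpa [ENNReal.toReal_ofReal hp.le] using
    hf.integrable_norm_rpow (by simpa using hp) ENNReal.ofReal_ne_top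

theorem exists_pos_measure_le_norm {f : S → X} (hf : ¬ f =ᵐ[μ] 0) :
    ∃ ε > 0, 0 < μ {t | ε ≤ ‖f t‖} := by
  by_contra! h
  refine hf ?_
  have hsmall : ∀ᵐ t ∂μ, ∀ k : ℕ, ‖f t‖ < 1 / ((k : ℝ) + 1) := ae_all_iff.2 fun k => by
    simpa [ae_iff] using h (1 / ((k : ℝ) + 1)) (by positivity)
  filter_upwards [hsmall] with t ht
  by_contra hne
  obtain ⟨k, hk⟩ := exists_nat_one_div_lt (norm_pos_iff.2 hne)
  exact (ht k).not_gt hk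

theorem exists_integral_norm_sub_rpow_le {p : ℝ} (hp : 1 ≤ p) :
    ∃ C : ℝ, ∀ {f g : S → X}, MemLp f (ENNReal.ofReal p) μ → MemLp g (ENNReal.ofReal p) μ →
      ∫ t, ‖f t - g t‖ ^ p ∂μ ≤ 2 * ∫ t, ‖f t‖ ^ p ∂μ + C * ∫ t, ‖g t‖ ^ p ∂μ := by
  have hp0 : 0 < p := by linarith
  obtain ⟨C, -, hC⟩ := exists_rpow_add_le hp one_pos
  refine ⟨C, fun {f g} hf hg => ?_⟩
  have hfi := (hf.integrable_norm_rpow_ofReal_s19 hp0).const_mul 2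
  have hgi := (hg.integrable_norm_rpow_ofReal_s19 hp0).const_mul C
  rw [← integral_const_mul, ← integral_const_mul, ← integral_add hfi hgi]
  refine integral_mono ((hf.sub hg).integrable_norm_rpow_ofReal_s19 hp0) (hfi.add hgi) fun t => ?_
  calc ‖f t - g t‖ ^ p ≤ (‖f t‖ + ‖g t‖) ^ p :=
        Real.rpow_le_rpow (norm_nonneg _) (norm_sub_le _ _) hp0.le
    _ ≤ 2 * ‖f t‖ ^ p + C * ‖g t‖ ^ p := by
        simpa [one_add_one_eq_two] using hC _ _ (norm_nonneg (f t)) (norm_nonneg (g t))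

theorem eventually_lt_integral_norm_sub_rpow_sub {p : ℝ} (hp : 1 ≤ p) {f : ℕ → S → X}
    {f₀ : S → X} (hf : ∀ n, MemLp (f n) (ENNReal.ofReal p) μ)
    (hf₀ : MemLp f₀ (ENNReal.ofReal p) μ) {B : ℝ}
    (hB : ∀ n, ∫ t, ‖f n t - f₀ t‖ ^ p ∂μ ≤ B) {g : S → ℝ} (hg : Integrable g μ)
    (hg0 : 0 ≤ᵐ[μ] g)
    (hlim : ∀ᵐ t ∂μ, ∀ y < g t, ∀ᶠ n in atTop, y < ‖f n t - f₀ t‖ ^ p - ‖f n t‖ ^ p)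
    {y : ℝ} (hy : y < ∫ t, g t ∂μ) :
    ∀ᶠ n in atTop, y < ∫ t, ‖f n t - f₀ t‖ ^ p ∂μ - ∫ t, ‖f n t‖ ^ p ∂μ := by
  have hp0 : 0 < p := by linarith
  obtain ⟨ε, hε, hεB⟩ := exists_pos_mul_lt (sub_pos.2 hy) B
  obtain ⟨C, hC0, hC⟩ := exists_rpow_add_le hp hε
  have hI : ∀ n, Integrable (fun t => ‖f n t‖ ^ p) μ :=
    fun n => (hf n).integrable_norm_rpow_ofReal_s19 hp0
  have hJ : ∀ n, Integrable (fun t => (1 + ε) * ‖f n t - f₀ t‖ ^ p) μ :=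
    fun n => (((hf n).sub hf₀).integrable_norm_rpow_ofReal_s19 hp0).const_mul _
  have hK : Integrable (fun t => C * ‖f₀ t‖ ^ p) μ :=
    (hf₀.integrable_norm_rpow_ofReal_s19 hp0).const_mul _
  -- `Φ n ≥ 0` by the choice of `C`; `Φ n` exceeds `‖f n - f₀‖ ^ p - ‖f n‖ ^ p` by
  -- `ε ‖f n - f₀‖ ^ p + C ‖f₀‖ ^ p`, whose first part is small in integral.
  set Φ : ℕ → S → ℝ := fun n t =>
    (1 + ε) * ‖f n t - f₀ t‖ ^ p + C * ‖f₀ t‖ ^ p - ‖f n t‖ ^ p with hΦ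
  have hΦi : ∀ n, Integrable (Φ n) μ := fun n => ((hJ n).add hK).sub (hI n)
  have hΦ0 : ∀ n, 0 ≤ᵐ[μ] Φ n := fun n => Eventually.of_forall fun t => by
    have := hC _ _ (norm_nonneg (f n t - f₀ t)) (norm_nonneg (f₀ t))
    have hmono := Real.rpow_le_rpow (norm_nonneg _)
      (norm_le_norm_add_norm_sub' (f n t) (f₀ t)) hp0.le
    simp only [hΦ, Pi.zero_apply, add_comm ‖f₀ t‖] at this hmono ⊢
    linarith
  have hΦint : ∀ n, ∫ t, Φ n t ∂μ = (1 + ε) * ∫ t, ‖f n t - f₀ t‖ ^ p ∂μ +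
      C * ∫ t, ‖f₀ t‖ ^ p ∂μ - ∫ t, ‖f n t‖ ^ p ∂μ := fun n => by
    have hJK : Integrable (fun t => (1 + ε) * ‖f n t - f₀ t‖ ^ p + C * ‖f₀ t‖ ^ p) μ :=
      (hJ n).add hK
    simp only [hΦ]
    rw [integral_sub hJK (hI n), integral_add (hJ n) hK, integral_const_mul, integral_const_mul]
  have hΦlim : ∀ᵐ t ∂μ, ∀ z < g t + C * ‖f₀ t‖ ^ p, ∀ᶠ n in atTop, z < Φ n t := by
    filter_upwards [hlim] with t ht z hz
    filter_upwards [ht (z - C * ‖f₀ t‖ ^ p) (by linarith)] with n hn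
    have : 0 ≤ ε * ‖f n t - f₀ t‖ ^ p := mul_nonneg hε.le (Real.rpow_nonneg (norm_nonneg _) p)
    simp only [hΦ]
    linarith
  have hgK : Integrable (fun t => g t + C * ‖f₀ t‖ ^ p) μ := hg.add hK
  have hgK0 : 0 ≤ᵐ[μ] fun t => g t + C * ‖f₀ t‖ ^ p := hg0.mono fun t ht => by
    have := mul_nonneg hC0 (Real.rpow_nonneg (norm_nonneg (f₀ t)) p)
    simp only [Pi.zero_apply] at ht ⊢
    linarith
  have hgKint : ∫ t, g t + C * ‖f₀ t‖ ^ p ∂μ = ∫ t, g t ∂μ + C * ∫ t, ‖f₀ t‖ ^ p ∂μ := by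
    rw [integral_add hg hK, integral_const_mul]
  filter_upwards [eventually_lt_integral_of_forall_lt_eventually hΦi hΦ0 hgK hgK0 hΦlim
    (y := y + ε * B + C * ∫ t, ‖f₀ t‖ ^ p ∂μ) (by linarith)] with n hn
  rw [hΦint] at hn
  linarith [mul_le_mul_of_nonneg_left (hB n) hε.le]

end Integrals

def UniformOpialProperty (X : Type*) [NormedAddCommGroup X] [NormedSpace ℝ X] : Prop :=
  ∀ ε R : ℝ, 0 < ε → 0 < R → ∃ η > (0 : ℝ), ∀ (z : X) (u : ℕ → X),
    WeaklyNull u → ε ≤ ‖z‖ → limsup (fun n => ‖u n‖) atTop ≤ R →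
    η + liminf (fun n => ‖u n‖) atTop ≤ liminf (fun n => ‖u n - z‖) atTop

namespace UniformOpialProperty

variable {X : Type*} [NormedAddCommGroup X] [NormedSpace ℝ X]

theorem liminf_norm_le_liminf_norm_sub (hX : UniformOpialProperty X) {R : ℝ} (hR : 0 < R)
    {u : ℕ → X} (hu : WeaklyNull u) (huR : limsup (fun n => ‖u n‖) atTop ≤ R) (z : X) :
    liminf (fun n => ‖u n‖) atTop ≤ liminf (fun n => ‖u n - z‖) atTop := by
  rcases eq_or_ne z 0 with rfl | hz
  · simp
  · obtain ⟨η, hη, hopial⟩ := hX ‖z‖ R (norm_pos_iff.2 hz) hR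
    linarith [hopial z u hu le_rfl huR]

theorem eventually_lt_norm_sub_rpow_sub_norm_rpow (hX : UniformOpialProperty X) {p : ℝ}
    (hp : 1 ≤ p) {ε M η₀ : ℝ} (hM : 0 < M) (hη₀ : 0 ≤ η₀)
    (hopial : ∀ (z : X) (u : ℕ → X), WeaklyNull u → ε ≤ ‖z‖ →
      limsup (fun n => ‖u n‖) atTop ≤ M →
      η₀ + liminf (fun n => ‖u n‖) atTop ≤ liminf (fun n => ‖u n - z‖) atTop)
    {u : ℕ → X} (hu : WeaklyNull u) {L : ℝ} (hL : Tendsto (fun n => ‖u n‖) atTop (𝓝 L))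
    (hLM : L ≤ M) (z : X) {y : ℝ} (hy : y < {x : X | ε ≤ ‖x‖}.indicator (fun _ => η₀ ^ p) z) :
    ∀ᶠ n in atTop, y < ‖u n - z‖ ^ p - ‖u n‖ ^ p := by
  have hL0 : 0 ≤ L := ge_of_tendsto' hL fun n => norm_nonneg _
  have huM : limsup (fun n => ‖u n‖) atTop ≤ M := hL.limsup_eq ▸ hLM
  by_cases hz : ε ≤ ‖z‖
  · rw [Set.indicator_of_mem (show z ∈ {x : X | ε ≤ ‖x‖} from hz)] at hy
    refine eventually_lt_rpow_sub_rpow hp hL0 hη₀ hL (fun n => norm_nonneg _) ?_ hy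
    linarith [hopial z u hu hz huM, hL.liminf_eq]
  · rw [Set.indicator_of_notMem (show z ∉ {x : X | ε ≤ ‖x‖} from hz)] at hy
    refine eventually_lt_rpow_sub_rpow hp hL0 le_rfl hL (fun n => norm_nonneg _) ?_
      (by rwa [Real.zero_rpow (by linarith)])
    simpa [← hL.liminf_eq] using hX.liminf_norm_le_liminf_norm_sub hM hu huM z

end UniformOpialProperty

theorem limsup_rpow_add_le_limsup_rpow {p : ℝ} (hp : 0 < p) {I J : ℕ → ℝ} {R B c η : ℝ}
    (hI : ∀ n, 0 ≤ I n) (hIR : ∀ n, I n ^ (1 / p) ≤ R) (hJ : ∀ n, 0 ≤ J n)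
    (hJB : ∀ n, J n ≤ B) (hη0 : 0 ≤ η) (hη : ∀ s ∈ Set.Icc 0 R, (s + η) ^ p ≤ s ^ p + c)
    (hgap : ∀ᶠ n in atTop, c < J n - I n) :
    limsup (fun n => I n ^ (1 / p)) atTop + η ≤ limsup (fun n => J n ^ (1 / p)) atTop := by
  have hle : ∀ᶠ n in atTop, I n ^ (1 / p) + η ≤ J n ^ (1 / p) := hgap.mono fun n hn => by
    have hsn := hη _ ⟨Real.rpow_nonneg (hI n) _, hIR n⟩
    rw [one_div, Real.rpow_inv_rpow (hI n) hp.ne'] at hsn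
    rw [one_div, Real.le_rpow_inv_iff_of_pos (add_nonneg (Real.rpow_nonneg (hI n) _) hη0) (hJ n) hp]
    linarith
  have hIbdd : IsBoundedUnder (· ≤ ·) atTop fun n => I n ^ (1 / p) :=
    isBoundedUnder_of ⟨R, hIR⟩
  have hIcobdd : IsCoboundedUnder (· ≤ ·) atTop fun n => I n ^ (1 / p) :=
    (isBoundedUnder_of ⟨0, fun n => Real.rpow_nonneg (hI n) _⟩).isCoboundedUnder_flip
  have hIηcobdd : IsCoboundedUnder (· ≤ ·) atTop fun n => I n ^ (1 / p) + η :=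
    (isBoundedUnder_of ⟨η, fun n => le_add_of_nonneg_left (Real.rpow_nonneg (hI n) _)⟩
      ).isCoboundedUnder_flip
  have hJbdd : IsBoundedUnder (· ≤ ·) atTop fun n => J n ^ (1 / p) :=
    isBoundedUnder_of ⟨B ^ (1 / p), fun n => Real.rpow_le_rpow (hJ n) (hJB n) (by positivity)⟩
  rw [← limsup_add_const _ _ _ hIbdd hIcobdd]
  exact limsup_le_limsup hle hIηcobdd hJbdd

theorem statement19_general {S : Type*} [MeasurableSpace S] (μ : Measure S)
    [IsFiniteMeasure μ] (p : ℝ) (hp : 1 ≤ p)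
    (X : Type*) [NormedAddCommGroup X] [NormedSpace ℝ X]
    (hOp : ∀ ε R : ℝ, 0 < ε → 0 < R → ∃ η > (0 : ℝ), ∀ (z : X) (u : ℕ → X),
      WeaklyNull u → ε ≤ ‖z‖ → limsup (fun n => ‖u n‖) atTop ≤ R →
      η + liminf (fun n => ‖u n‖) atTop ≤ liminf (fun n => ‖u n - z‖) atTop)
    (M R : ℝ) (hM : 0 < M)
    (f₀ : S → X) (hf₀ : MemLp f₀ (ENNReal.ofReal p) μ) (hne : ¬ f₀ =ᵐ[μ] 0) :
    ∃ η > (0 : ℝ), ∀ f : ℕ → S → X, (∀ n, MemLp (f n) (ENNReal.ofReal p) μ) →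
      (∀ n, (∫ t, ‖f n t‖ ^ p ∂μ) ^ (1 / p) ≤ R) →
      (∀ᵐ t ∂μ, (∀ φ : X →L[ℝ] ℝ, Tendsto (fun n => φ (f n t)) atTop (𝓝 0)) ∧
        ∃ L ≤ M, Tendsto (fun n => ‖f n t‖) atTop (𝓝 L)) →
      limsup (fun n => (∫ t, ‖f n t‖ ^ p ∂μ) ^ (1 / p)) atTop + η ≤
        limsup (fun n => (∫ t, ‖f n t - f₀ t‖ ^ p ∂μ) ^ (1 / p)) atTop := by
  have hp0 : 0 < p := by linarith
  have hX : UniformOpialProperty X := hOp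
  obtain ⟨ε, hε, hA⟩ := exists_pos_measure_le_norm hne
  obtain ⟨η₀, hη₀, hopial⟩ := hX ε M hε hM
  set A := {t | ε ≤ ‖f₀ t‖}
  have hAm : NullMeasurableSet A μ :=
    nullMeasurableSet_le aemeasurable_const hf₀.1.norm.aemeasurable
  set g := A.indicator fun _ => η₀ ^ p
  have hgpos : 0 < ∫ t, g t ∂μ := by
    rw [integral_indicator₀ hAm, setIntegral_const, smul_eq_mul]
    exact mul_pos (ENNReal.toReal_pos hA.ne' (measure_ne_top _ _)) (Real.rpow_pos_of_pos hη₀ p)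
  obtain ⟨η, hη, hηR⟩ := exists_pos_forall_add_rpow_le hp0 R (half_pos hgpos)
  obtain ⟨C, hC⟩ := exists_integral_norm_sub_rpow_le (μ := μ) (X := X) hp
  refine ⟨η, hη, fun f hf hfR hae => ?_⟩
  have hI0 : ∀ n, 0 ≤ ∫ t, ‖f n t‖ ^ p ∂μ := fun n => integral_nonneg fun t => by positivity
  have hIR : ∀ n, ∫ t, ‖f n t‖ ^ p ∂μ ≤ R ^ p := fun n =>
    (Real.rpow_inv_le_iff_of_pos (hI0 n) ((Real.rpow_nonneg (hI0 n) _).trans (hfR n)) hp0).1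
      (by simpa only [one_div] using hfR n)
  have hJB : ∀ n, ∫ t, ‖f n t - f₀ t‖ ^ p ∂μ ≤ 2 * R ^ p + C * ∫ t, ‖f₀ t‖ ^ p ∂μ :=
    fun n => (hC (hf n) hf₀).trans (by linarith [hIR n])
  have hgap := eventually_lt_integral_norm_sub_rpow_sub hp hf hf₀ hJB
    ((integrable_const _).indicator₀ hAm)
    (Eventually.of_forall fun t => Set.indicator_nonneg (fun _ _ => by positivity) t)
    (by
      filter_upwards [hae] with t ⟨hwk, L, hLM, hL⟩ y hy
      exact hX.eventually_lt_norm_sub_rpow_sub_norm_rpow hp hM hη₀.le hopial hwk hL hLM (f₀ t) hy)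
    (half_lt_self hgpos)
  exact limsup_rpow_add_le_limsup_rpow hp0 hI0 hfR (fun n => integral_nonneg fun t => by positivity)
    hJB hη.le hηR hgap

/-- Uniform-Opial-type inequality in Lebesgue–Bochner spaces `L^p(μ,X)` for a Banach space `X`
with the uniform Opial property: given `M, R > 0` and `f₀ ∈ L^p(μ,X)` with `f₀ ≠ 0`, there is
`η > 0` such that whenever `(f n)` is a sequence in `L^p(μ,X)` with `sup_n ‖f n‖_p ≤ R`,
converging weakly to `0` pointwise a.e. with `lim ‖f n t‖` existing and `≤ M` a.e., then
`limsup ‖f n‖_p + η ≤ limsup ‖f n - f₀‖_p`. -/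
theorem statement19 {S : Type*} [MeasurableSpace S] (μ : Measure S)
    [IsFiniteMeasure μ] [μ.IsComplete] (p : ℝ) (hp : 1 ≤ p)
    (X : Type*) [NormedAddCommGroup X] [NormedSpace ℝ X] [CompleteSpace X]
    (hOp : ∀ ε R : ℝ, 0 < ε → 0 < R → ∃ η > (0 : ℝ), ∀ (z : X) (u : ℕ → X),
      WeaklyNull u → ε ≤ ‖z‖ → limsup (fun n => ‖u n‖) atTop ≤ R →
      η + liminf (fun n => ‖u n‖) atTop ≤ liminf (fun n => ‖u n - z‖) atTop)
    (M R : ℝ) (hM : 0 < M) (hR : 0 < R)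
    (f₀ : S → X) (hf₀ : MemLp f₀ (ENNReal.ofReal p) μ) (hne : ¬ f₀ =ᵐ[μ] 0) :
    ∃ η > (0 : ℝ), ∀ f : ℕ → S → X, (∀ n, MemLp (f n) (ENNReal.ofReal p) μ) →
      (∀ n, (∫ t, ‖f n t‖ ^ p ∂μ) ^ (1 / p) ≤ R) →
      (∀ᵐ t ∂μ, (∀ φ : X →L[ℝ] ℝ, Tendsto (fun n => φ (f n t)) atTop (𝓝 0)) ∧
        ∃ L ≤ M, Tendsto (fun n => ‖f n t‖) atTop (𝓝 L)) →
      limsup (fun n => (∫ t, ‖f n t‖ ^ p ∂μ) ^ (1 / p)) atTop + η ≤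
        limsup (fun n => (∫ t, ‖f n t - f₀ t‖ ^ p ∂μ) ^ (1 / p)) atTop :=
  statement19_general μ p hp X hOp M R hM f₀ hf₀ hne
end
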